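/- arXiv:2007.08579 — 6 statements merged into one kernel-verified Lean document; each statement's English description precedes it below -/
import Mathlib

section
/- A completely regular Hausdorff space is compact if and only if it is both realcompact and countably compact. -/
open Set Filter Topology TopologicalSpace

universe u

/-- `C_p(X)`: continuous real-valued functions on `X` with the topology of pointwise
convergence (subspace of `X → ℝ` with the product topology). -/
abbrev Cp (X : Type*) [TopologicalSpace X] : Type _ := {f : X → ℝ // Continuous f}

/-- A space is realcompact if it embeds as a closed subspace of a power of `ℝ`. -/
def Realcompact (X : Type u) [TopologicalSpace X] : Prop :=
  ∃ (I : Type u) (f : X → I → ℝ), IsClosedEmbedding f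

/-- `Y` is countably compact in `X`: every infinite subset of `Y` has a limit
(accumulation) point in `X`. -/
def CountablyCompactIn {X : Type*} [TopologicalSpace X] (Y : Set X) : Prop :=
  ∀ A ⊆ Y, A.Infinite → ∃ x : X, AccPt x (𝓟 A)

/-- A space is countably compact: every countable open cover has a finite subcover. -/
def CountablyCompact (X : Type*) [TopologicalSpace X] : Prop :=
  ∀ U : ℕ → Set X, (∀ n, IsOpen (U n)) → (⋃ n, U n) = univ →
    ∃ t : Finset ℕ, (⋃ n ∈ t, U n) = univ

/-- A space is countably tight if every point in the closure of a set is in the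
closure of a countable subset. -/
def CountablyTight (X : Type*) [TopologicalSpace X] : Prop :=
  ∀ (A : Set X) (x : X), x ∈ closure A → ∃ B ⊆ A, B.Countable ∧ x ∈ closure B

/-- Property wD: for every countably infinite closed discrete subspace `{d n}` there is an
infinite `S ⊆ ℕ` and a discrete family of open sets `U n` (`n ∈ S`) with `d n ∈ U n`. -/
def WD (X : Type*) [TopologicalSpace X] : Prop :=
  ∀ d : ℕ → X, Function.Injective d → IsClosed (Set.range d) →
    DiscreteTopology (Set.range d) →
    ∃ (S : Set ℕ) (U : ℕ → Set X), S.Infinite ∧ (∀ n ∈ S, IsOpen (U n)) ∧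
      (∀ n ∈ S, d n ∈ U n) ∧
      ∀ x : X, ∃ V ∈ 𝓝 x, {n | n ∈ S ∧ (V ∩ U n).Nonempty}.Subsingleton

/-- `N` is a network for `X`. -/
def IsNetwork {X : Type*} [TopologicalSpace X] (N : Set (Set X)) : Prop :=
  ∀ (x : X) (U : Set X), IsOpen U → x ∈ U → ∃ A ∈ N, x ∈ A ∧ A ⊆ U


private lemma bounded_of_cc {X : Type u} [TopologicalSpace X] (hcc : CountablyCompact X)
    {g : X → ℝ} (hg : Continuous g) : ∃ M : ℝ, ∀ x, g x ∈ Set.Icc (-M) M := by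
  have hUo : ∀ n : ℕ, IsOpen (g ⁻¹' Set.Ioo (-(n:ℝ)) n) := fun n => isOpen_Ioo.preimage hg
  have hUu : (⋃ n : ℕ, g ⁻¹' Set.Ioo (-(n:ℝ)) n) = univ := by
    ext x
    simp only [mem_iUnion, mem_univ, iff_true, mem_preimage, mem_Ioo]
    obtain ⟨n, hn⟩ := exists_nat_gt (|g x|)
    exact ⟨n, by constructor <;> [linarith [neg_abs_le (g x)]; linarith [le_abs_self (g x)]]⟩
  obtain ⟨t, ht⟩ := hcc _ hUo hUu
  refine ⟨((t.sup id : ℕ) : ℝ), fun x => ?_⟩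
  have hx : x ∈ ⋃ n ∈ t, g ⁻¹' Set.Ioo (-(n:ℝ)) n := ht ▸ mem_univ x
  simp only [mem_iUnion, mem_preimage, mem_Ioo] at hx
  obtain ⟨n, hn, h1, h2⟩ := hx
  have hle : (n:ℝ) ≤ ((t.sup id : ℕ) : ℝ) := Nat.cast_le.mpr (Finset.le_sup (f := id) hn)
  exact ⟨by linarith, by linarith⟩

theorem compact_iff_realcompact_and_countablyCompact (X : Type u) [TopologicalSpace X]
    [CompletelyRegularSpace X] [T1Space X] :
    CompactSpace X ↔ Realcompact X ∧ CountablyCompact X := by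
  constructor
  · intro hX
    constructor
    · refine ⟨C(X, ℝ), fun x g => g x, ?_⟩
      have hcont : Continuous (fun x : X => fun g : C(X, ℝ) => g x) :=
        continuous_pi fun g => g.continuous
      refine hcont.isClosedEmbedding ?_
      intro x y hxy
      by_contra hne
      obtain ⟨f, hf, hfx, hfy⟩ := CompletelyRegularSpace.completely_regular x {y}
        isClosed_singleton (by simpa using hne)
      have hfy1 : f y = 1 := hfy rfl
      have := congrFun hxy ⟨fun z => (f z : ℝ), continuous_subtype_val.comp hf⟩
      simp only [ContinuousMap.coe_mk, hfx, hfy1] at this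
      norm_num at this
    · intro U hUo hUu
      obtain ⟨t, ht⟩ := isCompact_univ.elim_finite_subcover U hUo (by rw [hUu])
      exact ⟨t, subset_antisymm (subset_univ _) ht⟩
  · rintro ⟨⟨I, f, hf⟩, hcc⟩
    choose M hM using fun i => bounded_of_cc hcc ((continuous_apply i).comp hf.continuous)
    have hK : IsCompact (Set.pi univ fun i => Set.Icc (-(M i)) (M i)) :=
      isCompact_univ_pi fun i => isCompact_Icc
    have hrange : range f ⊆ Set.pi univ fun i => Set.Icc (-(M i)) (M i) := by
      rintro _ ⟨x, rfl⟩ i _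
      exact hM i x
    have hcomp : IsCompact (range f) := hK.of_isClosed_subset hf.isClosed_range hrange
    rw [← isCompact_univ_iff, hf.isEmbedding.isCompact_iff, image_univ]
    exact hcomp
end

section
/- Every realcompact space has property wD. -/
open Set Filter Topology TopologicalSpace

universe u

/-!
Let `e : X → ℝ^I` be a closed embedding and `{d n}` an infinite closed discrete set. If every
coordinate of `e` were bounded on `{d n}`, its image would be a closed subset of a product of
compact intervals, hence compact, which an infinite closed discrete set is not. So some
continuous `f : X → ℝ` is unbounded on `{d n}`; choosing `d (φ k)` with the values `f (d (φ k))`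
at least `4` apart, the preimages under `f` of the unit intervals around these values form a
discrete family, since a preimage of an interval of length `2` meets at most one of them.
-/

theorem exists_seq_add_lt_of_not_bddAbove {g : ℕ → ℝ} (hg : ¬BddAbove (range g)) {r : ℝ}
    (hr : 0 ≤ r) : ∃ φ : ℕ → ℕ, ∀ j k, j < k → g (φ j) + r < g (φ k) := by
  have hexceed : ∀ C, ∃ m, C < g m := fun C => by
    obtain ⟨_, ⟨m, rfl⟩, hm⟩ := not_bddAbove_iff.1 hg C
    exact ⟨m, hm⟩
  choose F hF using hexceed
  let φ : ℕ → ℕ := fun k => Nat.rec (F 0) (fun _ p => F (g p + r)) k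
  have step : ∀ k, g (φ k) + r < g (φ (k + 1)) := fun k => hF _
  have mono : StrictMono (g ∘ φ) :=
    strictMono_nat_of_lt_succ fun k => (le_add_of_nonneg_right hr).trans_lt (step k)
  exact ⟨φ, fun j k hjk => (step j).trans_le (mono.monotone hjk)⟩

theorem isCompact_of_isClosed_of_isBounded_eval {I : Type*} {K : Set (I → ℝ)} (hK : IsClosed K)
    (hb : ∀ i, Bornology.IsBounded (Function.eval i '' K)) : IsCompact K :=
  (isCompact_univ_pi fun i => Metric.isCompact_of_isClosed_isBounded isClosed_closure
    (hb i).closure).of_isClosed_subset hK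
    ((subset_pi_eval_image univ K).trans (pi_mono fun _ _ => subset_closure))

theorem Realcompact.exists_continuous_not_bddAbove_image {X : Type u} [TopologicalSpace X]
    (hX : Realcompact X) {D : Set X} (hDc : IsClosed D) (hDi : D.Infinite)
    (hDd : DiscreteTopology D) : ∃ f : X → ℝ, Continuous f ∧ ¬BddAbove (f '' D) := by
  obtain ⟨I, e, he⟩ := hX
  by_contra! hbdd
  have hcoord : ∀ i, Bornology.IsBounded (Function.eval i '' (e '' D)) := fun i => by
    obtain ⟨C, hC⟩ := hbdd (fun x => |e x i|) (continuous_abs.comp ((continuous_apply i).comp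
      he.continuous))
    refine isBounded_iff_forall_norm_le.2 ⟨C, ?_⟩
    rintro _ ⟨_, ⟨x, hx, rfl⟩, rfl⟩
    exact hC (mem_image_of_mem _ hx)
  have hcpt : IsCompact D := he.isInducing.isCompact_iff.2
    (isCompact_of_isClosed_of_isBounded_eval (he.isClosedMap D hDc) hcoord)
  exact hDi (hcpt.finite ⟨hDd⟩)

theorem exists_discrete_family_of_not_bddAbove {X : Type*} [TopologicalSpace X] {d : ℕ → X}
    {f : X → ℝ} (hf : Continuous f) (hunb : ¬BddAbove (range (f ∘ d))) :
    ∃ (S : Set ℕ) (U : ℕ → Set X), S.Infinite ∧ (∀ n ∈ S, IsOpen (U n)) ∧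
      (∀ n ∈ S, d n ∈ U n) ∧
      ∀ x : X, ∃ V ∈ 𝓝 x, {n | n ∈ S ∧ (V ∩ U n).Nonempty}.Subsingleton := by
  obtain ⟨φ, hφ⟩ := exists_seq_add_lt_of_not_bddAbove (g := fun n => f (d n)) hunb (r := 4)
    (by norm_num)
  have hmono : StrictMono fun k => f (d (φ k)) := fun j k hjk =>
    (lt_add_of_pos_right _ four_pos).trans (hφ j k hjk)
  have hφinj : φ.Injective := Function.Injective.of_comp (f := fun n => f (d n)) hmono.injective
  refine ⟨range φ, fun n => f ⁻¹' Metric.ball (f (d n)) 1, infinite_range_of_injective hφinj,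
    fun _ _ => Metric.isOpen_ball.preimage hf, fun _ _ => Metric.mem_ball_self one_pos, ?_⟩
  intro x
  refine ⟨f ⁻¹' Metric.ball (f x) 1, hf.continuousAt.preimage_mem_nhds
    (Metric.ball_mem_nhds _ one_pos), ?_⟩
  rintro _ ⟨⟨j, rfl⟩, y, hyV, hyU⟩ _ ⟨⟨k, rfl⟩, z, hzV, hzU⟩
  simp only [mem_preimage, Metric.mem_ball, Real.dist_eq, abs_lt] at hyV hyU hzV hzU
  by_contra hne
  rcases lt_or_gt_of_ne (fun h : j = k => hne (congrArg φ h)) with hlt | hlt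
  · linarith [hφ j k hlt]
  · linarith [hφ k j hlt]

theorem realcompact_wD {X : Type u} [TopologicalSpace X] (hX : Realcompact X) :
    WD X := by
  intro d hd hdc hdd
  obtain ⟨f, hf, hunb⟩ :=
    hX.exists_continuous_not_bddAbove_image hdc (infinite_range_of_injective hd) hdd
  exact exists_discrete_family_of_not_bddAbove hf (by rwa [range_comp])
end

section
/- If X is realcompact (hence wD), then every subset Y of X that is countably compact in X has compact closure, provided X is completely regular Hausdorff; i.e., every realcompact completely regular Hausdorff space is a g-space. -/
open Set Filter Topology TopologicalSpace

universe u

/-!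
The coordinates of a closed embedding `f : X → ℝ^I` are bounded on a set `Y` that is countably
compact in `X`: an unbounded sequence in `Y` would have an accumulation point `x`, yet only
finitely many of its terms lie in the neighbourhood of `x` on which the coordinate stays below
its value at `x` plus one. Hence `f '' Y` lies in a compact box of `ℝ^I`, and `closure Y` is a
closed subset of the preimage of that box, which is compact because a closed embedding is proper.
The accumulation-point argument needs `X` to be T1, which holds as `X` embeds in `ℝ^I`.
-/

section CountablyCompactIn

variable {X : Type*} [TopologicalSpace X] [T1Space X] {Y : Set X}

lemma CountablyCompactIn.bddAbove_image (hY : CountablyCompactIn Y) {g : X → ℝ}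
    (hg : Continuous g) : BddAbove (g '' Y) := by
  by_contra hunbdd
  have hlarge : ∀ n : ℕ, ∃ y ∈ Y, (n : ℝ) < g y := fun n => by
    simpa using not_bddAbove_iff.1 hunbdd n
  choose z hzY hz using hlarge
  have hinf : (range z).Infinite := by
    refine (Set.infinite_of_not_bddAbove fun ⟨M, hM⟩ => ?_).of_image g
    obtain ⟨n, hn⟩ := exists_nat_gt M
    exact (hn.trans (hz n)).not_ge (hM ⟨z n, mem_range_self n, rfl⟩)
  obtain ⟨x, hx⟩ := hY (range z) (range_subset_iff.2 hzY) hinf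
  have hV : g ⁻¹' Iio (g x + 1) ∈ 𝓝 x :=
    hg.continuousAt.preimage_mem_nhds (Iio_mem_nhds (lt_add_one _))
  -- in a T1 space every neighbourhood of an accumulation point meets the set infinitely often
  refine (Set.Infinite.of_accPt (hx.nhds_inter hV)).not_finite ?_
  refine ((finite_Iio ⌈g x + 1⌉₊).image z).subset ?_
  rintro _ ⟨hlt, n, rfl⟩
  exact ⟨n, Nat.lt_ceil.2 ((hz n).trans hlt), rfl⟩

lemma CountablyCompactIn.isBounded_image {E : Type*} [PseudoMetricSpace E]
    (hY : CountablyCompactIn Y) {g : X → E} (hg : Continuous g) :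
    Bornology.IsBounded (g '' Y) := by
  rcases Y.eq_empty_or_nonempty with rfl | ⟨y₀, -⟩
  · simp
  obtain ⟨R, hR⟩ := hY.bddAbove_image
    (hg.dist continuous_const : Continuous fun y => dist (g y) (g y₀))
  refine (Metric.isBounded_closedBall (x := g y₀) (r := R)).subset ?_
  rintro _ ⟨y, hy, rfl⟩
  exact hR ⟨y, hy, rfl⟩

end CountablyCompactIn

lemma Topology.IsClosedEmbedding.isCompact_closure_of_isBounded_eval {X : Type*}
    [TopologicalSpace X] {ι : Type*} {E : ι → Type*} [∀ i, PseudoMetricSpace (E i)]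
    [∀ i, ProperSpace (E i)] {f : X → ∀ i, E i} (hf : IsClosedEmbedding f) {Y : Set X}
    (hY : ∀ i, Bornology.IsBounded ((f · i) '' Y)) : IsCompact (closure Y) := by
  set box := univ.pi fun i => closure ((f · i) '' Y)
  have hbox : IsCompact box := isCompact_univ_pi fun i => (hY i).isCompact_closure
  have hYbox : Y ⊆ f ⁻¹' box := fun y hy i _ => subset_closure ⟨y, hy, rfl⟩
  refine (hf.isCompact_preimage hbox).of_isClosed_subset isClosed_closure
    (closure_minimal hYbox ?_)
  exact (isClosed_set_pi fun i _ => isClosed_closure).preimage hf.continuous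

theorem realcompact_gspace_general {X : Type u} [TopologicalSpace X]
    (hX : Realcompact X) :
    ∀ Y : Set X, CountablyCompactIn Y → IsCompact (closure Y) := by
  obtain ⟨I, f, hf⟩ := hX
  have : T2Space X := hf.isEmbedding.t2Space
  intro Y hY
  exact hf.isCompact_closure_of_isBounded_eval fun i =>
    hY.isBounded_image ((continuous_apply i).comp hf.continuous)

theorem realcompact_gspace {X : Type u} [TopologicalSpace X]
    [CompletelyRegularSpace X] [T2Space X] (hX : Realcompact X) :
    ∀ Y : Set X, CountablyCompactIn Y → IsCompact (closure Y) :=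
  realcompact_gspace_general hX
end

section
/- If X is countably tight, then C_p(X) is a g-space; that is, every subset A of C_p(X) all of whose infinite subsets have a limit point in C_p(X) has compact closure in C_p(X). -/
open Set Filter Topology TopologicalSpace

universe u

/-!
If `A ⊆ C_p(X)` is countably compact in `C_p(X)`, every sequence in `A` has a cluster point in
`C_p(X)`. Hence `A` is pointwise bounded, so by Tychonoff its closure in `ℝ^X` is compact, and it
remains to see that every `f` in this closure is continuous. Given a sequence `p` of points, a
sequence in `A` approximating `f` ever better on `p 0, …, p k` has a continuous cluster point,
which agrees with `f` on all of `p`. So `f` agrees with a continuous function on every countable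
set, and in a countably tight space this forces `f` to be continuous.
-/

namespace CountablyCompactIn

variable {Y : Type*} [TopologicalSpace Y] [T1Space Y] {A : Set Y}

theorem exists_mapClusterPt (hA : CountablyCompactIn A) {u : ℕ → Y} (hu : ∀ n, u n ∈ A) :
    ∃ y, MapClusterPt y atTop u := by
  by_cases hfin : (range u).Finite
  · obtain ⟨y, -, hy⟩ := hfin.isCompact.exists_mapClusterPt_of_frequently
      (Frequently.of_forall (f := atTop) mem_range_self)
    exact ⟨y, hy⟩
  · obtain ⟨y, hy⟩ := hA (range u) (range_subset_iff.2 hu) hfin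
    refine ⟨y, mapClusterPt_iff_frequently.2 fun s hs => ?_⟩
    rw [Nat.frequently_atTop_iff_infinite]
    refine (Infinite.of_accPt (hy.nhds_inter hs)).mono ?_ |>.of_image u
    rintro _ ⟨hs, n, rfl⟩
    exact mem_image_of_mem u hs

theorem exists_forall_abs_le (hA : CountablyCompactIn A) {φ : Y → ℝ} (hφ : Continuous φ) :
    ∃ M, ∀ a ∈ A, |φ a| ≤ M := by
  by_contra! h
  choose u huA hu using fun n : ℕ => h n
  obtain ⟨y, hy⟩ := hA.exists_mapClusterPt huA
  have hnear : ∃ᶠ n in atTop, |φ (u n)| < |φ y| + 1 :=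
    (hy.continuousAt_comp hφ.abs.continuousAt).frequently (gt_mem_nhds (lt_add_one _))
  have hfar : ∀ᶠ n : ℕ in atTop, |φ y| + 1 ≤ n :=
    tendsto_natCast_atTop_atTop.eventually_ge_atTop _
  obtain ⟨n, hn, hn'⟩ := (hnear.and_eventually hfar).exists
  linarith [hu n]

end CountablyCompactIn

theorem CountablyTight.continuous_of_exists_continuous_eqOn_range {X Y : Type*}
    [TopologicalSpace X] [TopologicalSpace Y] (ht : CountablyTight X) {f : X → Y}
    (hf : ∀ p : ℕ → X, ∃ h : X → Y, Continuous h ∧ EqOn h f (range p)) : Continuous f := by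
  refine continuous_iff_image_closure_subset_closure_image.2 fun s => ?_
  rintro _ ⟨x, hx, rfl⟩
  obtain ⟨B, hBs, hBc, hxB⟩ := ht s x hx
  have : Nonempty X := ⟨x⟩
  obtain ⟨p, hp⟩ := countable_iff_exists_subset_range.1 (hBc.insert x)
  obtain ⟨h, hh, hhf⟩ := hf p
  have hfx : h x ∈ closure (h '' B) :=
    image_closure_subset_closure_image hh (mem_image_of_mem h hxB)
  rw [hhf (hp (mem_insert x B)), ((hhf.mono hp).mono (subset_insert x B)).image_eq] at hfx
  exact closure_mono (image_mono hBs) hfx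

theorem exists_forall_abs_sub_lt_of_mem_closure {ι : Type*} {S : Set (ι → ℝ)} {f : ι → ℝ}
    (hf : f ∈ closure S) {s : Set ι} (hs : s.Finite) {ε : ℝ} (hε : 0 < ε) :
    ∃ u ∈ S, ∀ i ∈ s, |u i - f i| < ε := by
  have hnear : ∀ᶠ u in 𝓝 f, ∀ i ∈ s, |u i - f i| < ε :=
    hs.eventually_all.2 fun i _ => by
      simpa only [Real.dist_eq] using
        Metric.tendsto_nhds.1 ((continuous_apply i).tendsto f) ε hε
  exact (mem_closure_iff_frequently.1 hf).and_eventually hnear |>.exists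

theorem isCompact_closure_of_forall_abs_le {ι : Type*} {S : Set (ι → ℝ)} (M : ι → ℝ)
    (hS : ∀ u ∈ S, ∀ i, |u i| ≤ M i) : IsCompact (closure S) :=
  (isCompact_univ_pi fun _ => isCompact_Icc).of_isClosed_subset isClosed_closure <|
    closure_minimal (fun u hu i _ => abs_le.1 (hS u hu i))
      (isClosed_set_pi fun _ _ => isClosed_Icc)

theorem Cp.continuous_eval {X : Type*} [TopologicalSpace X] (x : X) :
    Continuous fun u : Cp X => u.1 x :=
  (continuous_apply x).comp continuous_subtype_val

namespace CountablyCompactIn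

variable {X : Type*} [TopologicalSpace X] {A : Set (Cp X)}

theorem exists_eqOn_range_of_mem_closure (hA : CountablyCompactIn A) {f : X → ℝ}
    (hf : f ∈ closure (Subtype.val '' A)) (p : ℕ → X) :
    ∃ h : Cp X, EqOn h.1 f (range p) := by
  have happrox : ∀ k : ℕ, ∃ v ∈ A, ∀ j ≤ k, |v.1 (p j) - f (p j)| < 1 / (k + 1) := fun k => by
    obtain ⟨_, ⟨v, hvA, rfl⟩, hv⟩ := exists_forall_abs_sub_lt_of_mem_closure hf
      ((finite_Iic k).image p) Nat.one_div_pos_of_nat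
    exact ⟨v, hvA, fun j hj => hv _ (mem_image_of_mem p hj)⟩
  choose g hgA hg using happrox
  obtain ⟨h, hh⟩ := hA.exists_mapClusterPt hgA
  refine ⟨h, ?_⟩
  rintro _ ⟨n, rfl⟩
  have hlim : Tendsto (fun k => (g k).1 (p n)) atTop (𝓝 (f (p n))) := by
    refine tendsto_iff_dist_tendsto_zero.2 <|
      squeeze_zero' (Eventually.of_forall fun _ => dist_nonneg) ?_
        tendsto_one_div_add_atTop_nhds_zero_nat
    filter_upwards [eventually_ge_atTop n] with k hk
    exact (Real.dist_eq _ _ ▸ hg k n hk).le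
  have hclus : MapClusterPt (h.1 (p n)) atTop fun k => (g k).1 (p n) :=
    hh.continuousAt_comp (Cp.continuous_eval (p n)).continuousAt
  by_contra hne
  exact clusterPt_iff_not_disjoint.1 hclus ((disjoint_nhds_nhds.2 hne).mono_right hlim)

theorem continuous_of_mem_closure (ht : CountablyTight X) (hA : CountablyCompactIn A)
    {f : X → ℝ} (hf : f ∈ closure (Subtype.val '' A)) : Continuous f :=
  ht.continuous_of_exists_continuous_eqOn_range fun p =>
    let ⟨h, hh⟩ := hA.exists_eqOn_range_of_mem_closure hf p
    ⟨h.1, h.2, hh⟩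

end CountablyCompactIn

theorem Cp_gspace_of_countablyTight_general {X : Type*} [TopologicalSpace X]
    (ht : CountablyTight X) :
    ∀ A : Set (Cp X), (∀ B ⊆ A, B.Infinite → ∃ f : Cp X, AccPt f (𝓟 B)) →
      IsCompact (closure A) := by
  intro A hA
  change CountablyCompactIn A at hA
  choose M hM using fun x => hA.exists_forall_abs_le (Cp.continuous_eval x)
  have hcont : closure (Subtype.val '' A) ⊆ range Subtype.val := fun f hf =>
    ⟨⟨f, hA.continuous_of_mem_closure ht hf⟩, rfl⟩
  rw [IsEmbedding.subtypeVal.isCompact_iff,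
    IsEmbedding.subtypeVal.closure_eq_preimage_closure_image, image_preimage_eq_of_subset hcont]
  exact isCompact_closure_of_forall_abs_le M fun _ ⟨u, hu, hfu⟩ x => hfu ▸ hM x u hu

theorem Cp_gspace_of_countablyTight {X : Type*} [TopologicalSpace X]
    [CompletelyRegularSpace X] [T2Space X] (ht : CountablyTight X) :
    ∀ A : Set (Cp X), (∀ B ⊆ A, B.Infinite → ∃ f : Cp X, AccPt f (𝓟 B)) →
      IsCompact (closure A) :=
  Cp_gspace_of_countablyTight_general ht
end

section
/- If X is countably compact and A ⊆ C_p(X) is such that every infinite subset of A has a limit point in C_p(X), then the closure of A in C_p(X) is compact (Grothendieck's theorem). -/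
open Set Filter Topology TopologicalSpace

universe u

/-!
Tychonoff's theorem reduces everything to showing that a pointwise limit `g` of functions of `A`
is continuous, since `A` is pointwise bounded. If `g` jumps by `ε` at `x₀`, one picks alternately
`Fₙ ∈ A` close to `g` at `x₀, Y₀, …, Yₙ₋₁` and points `Yₙ` near `x₀`, where `F₀, …, Fₙ` are still
`ε / 2`-close to their values at `x₀` but `g` is `ε`-far from `g x₀`. For a cluster point `h` of
`(Fₙ)` in `C_p(X)` and a cluster point `y` of `(Yₙ)` in `X`, `h` agrees with `g` at `x₀` and every
`Yₘ`, so continuity of `h` at `y` gives `ε ≤ |h y - h x₀|`, while continuity of the `Fⱼ` at `y`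
gives `|h y - h x₀| ≤ ε / 2`.
-/

lemma countablyCompactSpace_of_countablyCompact {X : Type*} [TopologicalSpace X]
    (hX : CountablyCompact X) : CountablyCompactSpace X :=
  isCountablyCompact_univ_iff.1 <| isCountablyCompact_iff_countable_open_cover.2
    fun U hU hcover => (hX U hU (univ_subset_iff.1 hcover)).imp fun _ ht => ht.symm.subset

lemma exists_mapClusterPt_of_forall_infinite_accPt {Z : Type*} [TopologicalSpace Z] [T1Space Z]
    {A : Set Z} (hA : ∀ B ⊆ A, B.Infinite → ∃ z, AccPt z (𝓟 B)) {u : ℕ → Z}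
    (hu : ∀ n, u n ∈ A) : ∃ z, MapClusterPt z atTop u := by
  rw [← Nat.cofinite_eq_atTop]
  by_cases hfin : (range u).Finite
  · obtain ⟨z, -, hz⟩ :=
      hfin.isCompact.exists_mapClusterPt_of_frequently
        (Frequently.of_forall (f := cofinite) mem_range_self)
    exact ⟨z, hz⟩
  · obtain ⟨z, hz⟩ := hA (range u) (range_subset_iff.2 hu) hfin
    refine ⟨z, ?_⟩
    simp_rw [mapClusterPt_iff_frequently, frequently_cofinite_iff_infinite]
    exact fun s hs ↦ Infinite.of_accPt (hz.nhds_inter hs) |>.mono (by grind) |>.of_image u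

lemma MapClusterPt.eq_of_tendsto {ι Z : Type*} [TopologicalSpace Z] [T2Space Z] {l : Filter ι}
    {u : ι → Z} {a b : Z} (ha : MapClusterPt a l u) (hb : Tendsto u l (𝓝 b)) : a = b := by
  by_contra hne
  exact (ha.clusterPt.mono hb).ne (disjoint_nhds_nhds.2 hne).eq_bot

lemma exists_forall_abs_le_of_mapClusterPt {Z : Type*} [TopologicalSpace Z] {A : Set Z}
    (hA : ∀ u : ℕ → Z, (∀ n, u n ∈ A) → ∃ z, MapClusterPt z atTop u) {φ : Z → ℝ}
    (hφ : Continuous φ) : ∃ c, ∀ a ∈ A, |φ a| ≤ c := by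
  by_contra! hunbdd
  choose u huA hu using fun n : ℕ => hunbdd n
  obtain ⟨z, hz⟩ := hA u huA
  have hfar : ∀ᶠ n in atTop, |φ (u n)| ∈ Ici (|φ z| + 1) :=
    (tendsto_natCast_atTop_atTop.eventually_ge_atTop _).mono fun n hn => hn.trans (hu n).le
  have := isClosed_Ici.mem_of_mapClusterPt (hz.continuousAt_comp (hφ.abs.continuousAt)) hfar
  exact absurd this (by simp)

lemma isCompact_closure_of_forall_abs_le_s6 {X : Type*} {S : Set (X → ℝ)} (c : X → ℝ)
    (hS : ∀ f ∈ S, ∀ x, |f x| ≤ c x) : IsCompact (closure S) :=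
  (isCompact_univ_pi fun x => isCompact_Icc (a := -c x) (b := c x)).of_isClosed_subset
    isClosed_closure <| closure_minimal (fun f hf x _ => abs_le.1 (hS f hf x))
      (isClosed_set_pi fun _ _ => isClosed_Icc)

lemma exists_mem_forall_dist_lt_of_mem_closure {X : Type*} {S : Set (X → ℝ)} {g : X → ℝ}
    (hg : g ∈ closure S) (t : Finset X) {δ : ℝ} (hδ : 0 < δ) :
    ∃ f ∈ S, ∀ z ∈ t, dist (f z) (g z) < δ :=
  ((mem_closure_iff_frequently.1 hg).and_eventually <| (eventually_all_finset t).2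
    fun z _ => Metric.tendsto_nhds.1 ((continuous_apply z).tendsto g) δ hδ).exists

section ContinuityOfLimits

variable {X : Type*} [TopologicalSpace X]

lemma Cp.continuous_apply (x : X) : Continuous fun f : Cp X => f.1 x :=
  (_root_.continuous_apply x).comp continuous_subtype_val

lemma exists_seq_of_frequently_le_dist {A : Set (Cp X)} {g : X → ℝ}
    (hg : g ∈ closure (Subtype.val '' A)) {x₀ : X} {ε : ℝ} (hε : 0 < ε)
    (hjump : ∃ᶠ z in 𝓝 x₀, ε ≤ dist (g z) (g x₀)) :
    ∃ (F : ℕ → Cp X) (Y : ℕ → X), (∀ n, F n ∈ A) ∧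
      Tendsto (fun n => (F n).1 x₀) atTop (𝓝 (g x₀)) ∧
      (∀ m, Tendsto (fun n => (F n).1 (Y m)) atTop (𝓝 (g (Y m)))) ∧
      (∀ j n, j ≤ n → dist ((F j).1 (Y n)) ((F j).1 x₀) < ε / 2) ∧
      (∀ n, ε ≤ dist (g (Y n)) (g x₀)) := by
  classical
  -- The `ℕ`-component of a term `(k, f, y)` fixes the accuracy `1 / (k + 1)` of `f`.
  let P : ℕ × Cp X × X → Prop := fun p =>
    p.2.1 ∈ A ∧ dist (p.2.1.1 x₀) (g x₀) < 1 / (p.1 + 1) ∧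
      dist (p.2.1.1 p.2.2) (p.2.1.1 x₀) < ε / 2 ∧ ε ≤ dist (g p.2.2) (g x₀)
  let r : ℕ × Cp X × X → ℕ × Cp X × X → Prop := fun p q =>
    p.1 < q.1 ∧ dist (q.2.1.1 p.2.2) (g p.2.2) < 1 / (q.1 + 1) ∧
      dist (p.2.1.1 q.2.2) (p.2.1.1 x₀) < ε / 2
  obtain ⟨s, hP, hr⟩ := exists_seq_of_forall_finset_exists P r fun t _ => by
    set k := t.sup Prod.fst + 1
    obtain ⟨_, ⟨f, hfA, rfl⟩, hf⟩ := exists_mem_forall_dist_lt_of_mem_closure hg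
      (insert x₀ (t.image fun p => p.2.2)) (δ := 1 / (k + 1)) (by positivity)
    have hnear : ∀ φ : Cp X, ∀ᶠ z in 𝓝 x₀, dist (φ.1 z) (φ.1 x₀) < ε / 2 := fun φ =>
      Metric.tendsto_nhds.1 (φ.2.tendsto x₀) _ (half_pos hε)
    obtain ⟨y, hy, hfy, hty⟩ := (hjump.and_eventually
      ((hnear f).and ((eventually_all_finset t).2 fun p _ => hnear p.2.1))).exists
    refine ⟨(k, f, y), ⟨hfA, hf x₀ (Finset.mem_insert_self _ _), hfy, hy⟩, fun p hp => ?_⟩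
    exact ⟨Nat.lt_succ_of_le (Finset.le_sup (f := Prod.fst) hp),
      hf _ (Finset.mem_insert_of_mem (Finset.mem_image_of_mem _ hp)), hty p hp⟩
  have hk : StrictMono fun n => (s n).1 :=
    strictMono_nat_of_lt_succ fun n => (hr n _ n.lt_succ_self).1
  have hδ : Tendsto (fun n => 1 / (((s n).1 : ℝ) + 1)) atTop (𝓝 0) :=
    tendsto_one_div_add_atTop_nhds_zero_nat.comp hk.tendsto_atTop
  refine ⟨fun n => (s n).2.1, fun n => (s n).2.2, fun n => (hP n).1, ?_, fun m => ?_,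
    fun j n hjn => ?_, fun n => (hP n).2.2.2⟩
  · exact tendsto_iff_dist_tendsto_zero.2 <|
      squeeze_zero (fun _ => dist_nonneg) (fun n => (hP n).2.1.le) hδ
  · exact tendsto_iff_dist_tendsto_zero.2 <|
      squeeze_zero' (Eventually.of_forall fun _ => dist_nonneg)
        ((eventually_gt_atTop m).mono fun n hn => (hr m n hn).2.1.le) hδ
  · rcases hjn.lt_or_eq with hjn | rfl
    · exact (hr j n hjn).2.2
    · exact (hP j).2.2.1

lemma continuous_of_mem_closure_of_mapClusterPt [CountablyCompactSpace X] {A : Set (Cp X)}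
    (hA : ∀ F : ℕ → Cp X, (∀ n, F n ∈ A) → ∃ h, MapClusterPt h atTop F)
    {g : X → ℝ} (hg : g ∈ closure (Subtype.val '' A)) : Continuous g := by
  refine continuous_iff_continuousAt.2 fun x₀ => ?_
  by_contra hdisc
  obtain ⟨ε, hε, hjump⟩ : ∃ ε > 0, ∃ᶠ z in 𝓝 x₀, ε ≤ dist (g z) (g x₀) := by
    simpa [ContinuousAt, Metric.tendsto_nhds] using hdisc
  obtain ⟨F, Y, hFA, hFx₀, hFY, hFnear, hYfar⟩ := exists_seq_of_frequently_le_dist hg hε hjump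
  obtain ⟨h, hh⟩ := hA F hFA
  obtain ⟨y, -, hy⟩ := CountablyCompactSpace.isCountablyCompact_univ.seq_clusterPt Y
    (Eventually.of_forall fun _ => trivial)
  have hx₀ : h.1 x₀ = g x₀ :=
    (hh.continuousAt_comp (Cp.continuous_apply x₀).continuousAt).eq_of_tendsto hFx₀
  have hYm : ∀ m, h.1 (Y m) = g (Y m) := fun m =>
    (hh.continuousAt_comp (Cp.continuous_apply (Y m)).continuousAt).eq_of_tendsto (hFY m)
  have hfar : ε ≤ dist (h.1 y) (h.1 x₀) :=
    (isClosed_le continuous_const (continuous_id.dist continuous_const)).mem_of_mapClusterPt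
      (hy.continuousAt_comp h.2.continuousAt)
      (Eventually.of_forall fun n => by simpa [hYm, hx₀] using hYfar n)
  have hFjy : ∀ j, dist ((F j).1 y) ((F j).1 x₀) ≤ ε / 2 := fun j =>
    (isClosed_le (continuous_id.dist continuous_const) continuous_const).mem_of_mapClusterPt
      (hy.continuousAt_comp (F j).2.continuousAt)
      ((eventually_ge_atTop j).mono fun n hn => (hFnear j n hn).le)
  have hnear : dist (h.1 y) (h.1 x₀) ≤ ε / 2 :=
    (isClosed_le ((Cp.continuous_apply y).dist (Cp.continuous_apply x₀))
      continuous_const).mem_of_mapClusterPt hh (Eventually.of_forall hFjy)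
  linarith

end ContinuityOfLimits

theorem grothendieck_theorem_general {X : Type*} [TopologicalSpace X]
    (hX : CountablyCompact X)
    (A : Set (Cp X)) (hA : ∀ B ⊆ A, B.Infinite → ∃ f : Cp X, AccPt f (𝓟 B)) :
    IsCompact (closure A) := by
  have := countablyCompactSpace_of_countablyCompact hX
  have hAseq : ∀ F : ℕ → Cp X, (∀ n, F n ∈ A) → ∃ h, MapClusterPt h atTop F :=
    fun _ hF => exists_mapClusterPt_of_forall_infinite_accPt hA hF
  choose c hc using fun x => exists_forall_abs_le_of_mapClusterPt hAseq (Cp.continuous_apply x)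
  have hcompact : IsCompact (closure (Subtype.val '' A)) :=
    isCompact_closure_of_forall_abs_le_s6 c fun _ ⟨f, hf, hfg⟩ x => hfg ▸ hc x f hf
  have hcont : closure (Subtype.val '' A) ⊆ range Subtype.val := fun g hg =>
    ⟨⟨g, continuous_of_mem_closure_of_mapClusterPt hAseq hg⟩, rfl⟩
  rw [IsInducing.subtypeVal.closure_eq_preimage_closure_image A]
  exact IsInducing.subtypeVal.isCompact_preimage' hcompact hcont

theorem grothendieck_theorem {X : Type*} [TopologicalSpace X]
    [CompletelyRegularSpace X] [T2Space X] (hX : CountablyCompact X)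
    (A : Set (Cp X)) (hA : ∀ B ⊆ A, B.Infinite → ∃ f : Cp X, AccPt f (𝓟 B)) :
    IsCompact (closure A) :=
  grothendieck_theorem_general hX A hA
end

section
/- If X is Lindelöf and countably tight, then X contains no free sequence of length ω₁. -/
open Set Filter Topology TopologicalSpace

universe u

/-!
Lindelöfness gives a point `p` in the closure of every tail `x '' [β, ω₁)`: a countable
subfamily of these closed sets is indexed by ordinals bounded by some `γ < ω₁`, so it
contains `x γ`. Countable tightness puts `p` in the closure of countably many terms, hence of
an initial segment `x '' [0, γ)` with `γ < ω₁`, and freeness at `γ` forbids this.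
-/

open Ordinal

theorem Set.Countable.exists_countable_subset_image_eq {α β : Type*} {f : α → β} {s : Set α}
    {t : Set β} (ht : t.Countable) (hts : t ⊆ f '' s) :
    ∃ u ⊆ s, u.Countable ∧ f '' u = t := by
  choose g hgs hfg using fun b : t => hts b.2
  have := ht.to_subtype
  refine ⟨range g, range_subset_iff.2 hgs, countable_range g, ?_⟩
  ext b
  simp [hfg]

theorem Set.Countable.exists_lt_omega_one_subset_Iio {s : Set Ordinal} (hs : s.Countable)
    (hs₁ : s ⊆ Iio ω₁) : ∃ γ < ω₁, s ⊆ Iio γ := by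
  have := hs.to_subtype
  have hlim : Order.IsSuccLimit ω₁ := Cardinal.isSuccLimit_omega 1
  let f : s → Ordinal := fun α => Order.succ α.1
  refine ⟨⨆ α, f α, iSup_lt_omega_one fun α => hlim.succ_lt (hs₁ α.2), fun α hα => ?_⟩
  exact (Order.lt_succ α).trans_le (Ordinal.le_iSup f ⟨α, hα⟩)

theorem LindelofSpace.exists_forall_mem_closure_image_Ico_omega_one {X : Type*}
    [TopologicalSpace X] [LindelofSpace X] (x : Ordinal → X) :
    ∃ p, ∀ β < ω₁, p ∈ closure (x '' Ico β ω₁) := by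
  by_contra! h
  obtain ⟨u, hu, hu_empty⟩ := isLindelof_univ.elim_countable_subfamily_closed
    (fun β : Iio ω₁ => closure (x '' Ico β.1 ω₁)) (fun _ => isClosed_closure)
    (by simpa [eq_empty_iff_forall_notMem] using h)
  obtain ⟨γ, hγ, hγu⟩ := (hu.image Subtype.val).exists_lt_omega_one_subset_Iio
    (image_subset_iff.2 fun β _ => β.2)
  refine hu_empty.subset ⟨mem_univ (x γ), mem_iInter₂.2 fun β hβ => subset_closure ?_⟩
  exact mem_image_of_mem x ⟨(hγu (mem_image_of_mem _ hβ)).le, hγ⟩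

theorem CountablyTight.exists_lt_omega_one_mem_closure_image_Iio {X : Type*}
    [TopologicalSpace X] (ht : CountablyTight X) {x : Ordinal → X} {p : X}
    (hp : p ∈ closure (x '' Iio ω₁)) : ∃ γ < ω₁, p ∈ closure (x '' Iio γ) := by
  obtain ⟨B, hB, hBc, hpB⟩ := ht _ p hp
  obtain ⟨S, hS, hSc, rfl⟩ := hBc.exists_countable_subset_image_eq hB
  obtain ⟨γ, hγ, hSγ⟩ := hSc.exists_lt_omega_one_subset_Iio hS
  exact ⟨γ, hγ, closure_mono (image_mono hSγ) hpB⟩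

theorem no_uncountable_free_sequence {X : Type*} [TopologicalSpace X]
    [LindelofSpace X] (ht : CountablyTight X) :
    ¬ ∃ x : Ordinal.{0} → X, ∀ β < (Cardinal.aleph 1).ord,
      Disjoint (closure (x '' {α | α < β}))
        (closure (x '' {α | β ≤ α ∧ α < (Cardinal.aleph 1).ord})) := by
  rintro ⟨x, hx⟩
  rw [Cardinal.ord_aleph] at hx
  obtain ⟨p, hp⟩ := LindelofSpace.exists_forall_mem_closure_image_Ico_omega_one x
  have hp₀ : p ∈ closure (x '' Iio ω₁) := by
    simpa [Ico, Iio] using hp 0 (omega_pos 1)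
  obtain ⟨γ, hγ, hpγ⟩ := ht.exists_lt_omega_one_mem_closure_image_Iio hp₀
  exact disjoint_left.1 (hx γ hγ) hpγ (hp γ hγ)
end
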